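/- Let v₁, v₂ ∈ SVL[1,∞), α>0, θ ∈ [1,∞), and γ₁, γ₁', γ₂, γ₂' > 0 with δ := γ₂/γ₂' − γ₁/γ₁' < 0. Then there is C such that for all n ∈ ℕ, ∑_{0 ≤ s₂ < n/γ₂'} 2^{-s₂γ₂'δαθ} v₂(2^{s₂})^θ v₁(2^{(n−s₂γ₂')/γ₁'})^θ ≤ C · 2^{-nδαθ} v₂(2^{n/γ₂'})^θ. -/

import Mathlib

/-- `SVL[1,∞)`: positive measurable functions `v` on `[1,∞)` such that for every `ε > 0`,
`v(t) t^(-ε)` is almost decreasing and `v(t) (log₂ (2t))^ε` is increasing on `[1,∞)`. -/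
def SVL (v : ℝ → ℝ) : Prop :=
  Measurable v ∧ (∀ t ≥ (1:ℝ), 0 < v t) ∧
  (∀ ε > (0:ℝ), ∃ C > (0:ℝ), ∀ t u : ℝ, 1 ≤ u → u ≤ t →
    v t * t ^ (-ε) ≤ C * (v u * u ^ (-ε))) ∧
  (∀ ε > (0:ℝ), MonotoneOn (fun t => v t * (Real.logb 2 (2 * t)) ^ ε) (Set.Ici 1))

/-! Write `a := -δαθ > 0` and `k := n - s₂γ₂' > 0`. Up to the factor `2^{-ak}`, the `s₂`-th summand
is the right-hand side `2^{an} v₂(2^{n/γ₂'})^θ` multiplied by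
`(v₂(2^{s₂}) / v₂(2^{n/γ₂'}))^θ v₁(2^{k/γ₁'})^θ`, and both slowly varying factors grow at most
like `2^{εk}` for every `ε > 0`: `v₁(t) ≲ t^ε` because `v₁(t) t^{-ε}` is almost decreasing, and
`v₂(2^x) ≤ 2^{ε(y-x)} v₂(2^y)` because `v₂(t) (log₂ 2t)^ε` is increasing. With `ε` small each
summand is `≲ 2^{-ak/2}` times the right-hand side, and since the values of `k` are spaced by `γ₂'`
the sum is dominated by a convergent geometric series. -/

namespace SVL

variable {v : ℝ → ℝ}

lemma pos (h : SVL v) {t : ℝ} (ht : 1 ≤ t) : 0 < v t := h.2.1 t ht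

private lemma mul_rpow_div_rpow {p q ε θ : ℝ} (hp : 0 ≤ p) (hq : 0 ≤ q) (hθ : θ ≠ 0) :
    (p * q ^ (ε / θ)) ^ θ = p ^ θ * q ^ ε := by
  rw [Real.mul_rpow hp (Real.rpow_nonneg hq _), ← Real.rpow_mul hq, div_mul_cancel₀ ε hθ]

lemma rpow (h : SVL v) {θ : ℝ} (hθ : 0 < θ) : SVL (fun t => v t ^ θ) := by
  obtain ⟨hmeas, hpos, hdec, hmono⟩ := h
  refine ⟨hmeas.pow_const θ, fun t ht => Real.rpow_pos_of_pos (hpos t ht) θ, ?_, ?_⟩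
  · intro ε hε
    obtain ⟨C, hC, hCdec⟩ := hdec (ε / θ) (div_pos hε hθ)
    refine ⟨C ^ θ, Real.rpow_pos_of_pos hC θ, fun t u hu hut => ?_⟩
    have ht : 0 ≤ t := by linarith
    have hu0 : 0 ≤ u := by linarith
    have key := Real.rpow_le_rpow
      (mul_nonneg (hpos t (hu.trans hut)).le (Real.rpow_nonneg ht _)) (hCdec t u hu hut) hθ.le
    simp only
    rwa [Real.mul_rpow hC.le (mul_nonneg (hpos u hu).le (Real.rpow_nonneg hu0 _)),
      ← neg_div, mul_rpow_div_rpow (hpos t (hu.trans hut)).le ht hθ.ne',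
      mul_rpow_div_rpow (hpos u hu).le hu0 hθ.ne'] at key
  · intro ε hε t ht s hs hts
    have hlog : ∀ x ∈ Set.Ici (1:ℝ), 0 ≤ Real.logb 2 (2 * x) := fun x hx =>
      Real.logb_nonneg one_lt_two (by linarith [Set.mem_Ici.mp hx])
    have key := Real.rpow_le_rpow
      (mul_nonneg (hpos t ht).le (Real.rpow_nonneg (hlog t ht) _))
      (hmono (ε / θ) (div_pos hε hθ) ht hs hts) hθ.le
    simp only at key ⊢
    rwa [mul_rpow_div_rpow (hpos t ht).le (hlog t ht) hθ.ne',
      mul_rpow_div_rpow (hpos s hs).le (hlog s hs) hθ.ne'] at key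

lemma exists_le_mul_rpow (h : SVL v) {ε : ℝ} (hε : 0 < ε) :
    ∃ C > 0, ∀ t ≥ 1, v t ≤ C * t ^ ε := by
  obtain ⟨C, hC, hdec⟩ := h.2.2.1 ε hε
  refine ⟨C * v 1, mul_pos hC (h.pos le_rfl), fun t ht => ?_⟩
  have key := hdec t 1 le_rfl ht
  rwa [Real.one_rpow, mul_one, Real.rpow_neg (by linarith), ← div_eq_mul_inv,
    div_le_iff₀ (Real.rpow_pos_of_pos (by linarith) ε)] at key

private lemma logb_two_mul_two_rpow (x : ℝ) : Real.logb 2 (2 * 2 ^ x) = x + 1 := by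
  rw [mul_comm, ← Real.rpow_add_one two_ne_zero, Real.logb_rpow two_pos one_lt_two.ne']

/-- The monotonicity of `v(t) (log₂ 2t)^ε` only gives the polynomial factor `((y+1)/(x+1))^ε`,
which is at most `e^{ε (y - x)}`; rescaling `ε` by `log 2` turns this into base `2`. -/
lemma apply_two_rpow_le (h : SVL v) {ε x y : ℝ} (hε : 0 < ε) (hx : 0 ≤ x) (hxy : x ≤ y) :
    v (2 ^ x) ≤ 2 ^ (ε * (y - x)) * v (2 ^ y) := by
  set η := ε * Real.log 2 with hη_def
  have hη : 0 < η := mul_pos hε (Real.log_pos one_lt_two)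
  have hmono := h.2.2.2 η hη (Real.one_le_rpow one_le_two hx)
    (Real.one_le_rpow one_le_two (hx.trans hxy)) (Real.rpow_le_rpow_of_exponent_le one_le_two hxy)
  simp only [logb_two_mul_two_rpow] at hmono
  have hx1 : 0 < x + 1 := by linarith
  have hgrowth : y + 1 ≤ (x + 1) * Real.exp (y - x) := by
    nlinarith [Real.add_one_le_exp (y - x)]
  have hpow : (y + 1) ^ η ≤ (x + 1) ^ η * 2 ^ (ε * (y - x)) := by
    calc (y + 1) ^ η ≤ ((x + 1) * Real.exp (y - x)) ^ η :=
          Real.rpow_le_rpow (by linarith) hgrowth hη.le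
      _ = (x + 1) ^ η * 2 ^ (ε * (y - x)) := by
          rw [Real.mul_rpow hx1.le (Real.exp_pos _).le, ← Real.exp_mul,
            Real.rpow_def_of_pos two_pos, hη_def]
          ring_nf
  refine le_of_mul_le_mul_right ?_ (Real.rpow_pos_of_pos hx1 η)
  calc v (2 ^ x) * (x + 1) ^ η ≤ v (2 ^ y) * (y + 1) ^ η := hmono
    _ ≤ v (2 ^ y) * ((x + 1) ^ η * 2 ^ (ε * (y - x))) :=
        mul_le_mul_of_nonneg_left hpow (h.pos (Real.one_le_rpow one_le_two (hx.trans hxy))).le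
    _ = 2 ^ (ε * (y - x)) * v (2 ^ y) * (x + 1) ^ η := by ring

end SVL

lemma sum_range_ceil_two_rpow_le {x c b : ℝ} (hc : 0 < c) (hb : 0 < b) :
    ∑ s ∈ Finset.range ⌈x / c⌉₊, (2:ℝ) ^ (-(b * (x - s * c))) ≤ (1 - 2 ^ (-(b * c)))⁻¹ := by
  set m := ⌈x / c⌉₊
  set r : ℝ := 2 ^ (-(b * c))
  have hr0 : 0 ≤ r := Real.rpow_nonneg zero_le_two _
  have hr1 : r < 1 := Real.rpow_lt_one_of_one_lt_of_neg one_lt_two (by nlinarith)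
  have hterm : ∀ s ∈ Finset.range m, (2:ℝ) ^ (-(b * (x - s * c))) ≤ r ^ (m - 1 - s) := by
    intro s hs
    have hsm : s < m := Finset.mem_range.mp hs
    have hlast : ((m - 1 : ℕ) : ℝ) < x / c := Nat.lt_ceil.mp (by omega)
    rw [lt_div_iff₀ hc] at hlast
    rw [← Real.rpow_natCast, ← Real.rpow_mul zero_le_two, Nat.cast_sub (by omega)]
    apply Real.rpow_le_rpow_of_exponent_le one_le_two
    nlinarith [mul_pos hb (sub_pos.2 hlast)]
  calc ∑ s ∈ Finset.range m, (2:ℝ) ^ (-(b * (x - s * c)))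
      ≤ ∑ s ∈ Finset.range m, r ^ (m - 1 - s) := Finset.sum_le_sum hterm
    _ = ∑ j ∈ Finset.range m, r ^ j := Finset.sum_range_reflect (fun j : ℕ => r ^ j) m
    _ ≤ (1 - r)⁻¹ := by
        simpa [← Finset.range_eq_Ico] using geom_sum_Ico_le_of_lt_one (m := 0) (n := m) hr0 hr1

lemma SVL.exists_summand_le {w₁ w₂ : ℝ → ℝ} (h₁ : SVL w₁) (h₂ : SVL w₂) {a c₁ c₂ : ℝ}
    (ha : 0 < a) (hc₁ : 0 < c₁) (hc₂ : 0 < c₂) :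
    ∃ C > 0, ∀ n s : ℝ, 0 ≤ s → s * c₂ ≤ n →
      2 ^ (a * (s * c₂)) * w₂ (2 ^ s) * w₁ (2 ^ ((n - s * c₂) / c₁))
        ≤ C * 2 ^ (-(a / 2 * (n - s * c₂))) * (2 ^ (a * n) * w₂ (2 ^ (n / c₂))) := by
  obtain ⟨C, hC, hw₁⟩ := h₁.exists_le_mul_rpow (ε := a * c₁ / 4) (by positivity)
  refine ⟨C, hC, fun n s hs hsn => ?_⟩
  set k := n - s * c₂ with hk
  have hk0 : 0 ≤ k := by linarith
  have hk₁ : 1 ≤ (2:ℝ) ^ (k / c₁) := Real.one_le_rpow one_le_two (div_nonneg hk0 hc₁.le)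
  have hv₁ : w₁ (2 ^ (k / c₁)) ≤ C * 2 ^ (a / 4 * k) := by
    have := hw₁ _ hk₁
    rwa [← Real.rpow_mul zero_le_two, show k / c₁ * (a * c₁ / 4) = a / 4 * k by field_simp] at this
  have hv₂ : w₂ (2 ^ s) ≤ 2 ^ (a / 4 * k) * w₂ (2 ^ (n / c₂)) := by
    have := h₂.apply_two_rpow_le (ε := a * c₂ / 4) (by positivity) hs ((le_div_iff₀ hc₂).2 hsn)
    rwa [show a * c₂ / 4 * (n / c₂ - s) = a / 4 * k by field_simp; ring] at this
  have hw₂ : 0 < w₂ (2 ^ (n / c₂)) :=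
    h₂.pos (Real.one_le_rpow one_le_two (div_nonneg (by nlinarith) hc₂.le))
  have hexp : a * (s * c₂) + a / 4 * k + a / 4 * k = -(a / 2 * k) + a * n := by rw [hk]; ring
  calc 2 ^ (a * (s * c₂)) * w₂ (2 ^ s) * w₁ (2 ^ (k / c₁))
      ≤ 2 ^ (a * (s * c₂)) * (2 ^ (a / 4 * k) * w₂ (2 ^ (n / c₂))) * (C * 2 ^ (a / 4 * k)) :=
        mul_le_mul (mul_le_mul_of_nonneg_left hv₂ (by positivity)) hv₁ (h₁.pos hk₁).le
          (by positivity)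
    _ = C * 2 ^ (a * (s * c₂) + a / 4 * k + a / 4 * k) * w₂ (2 ^ (n / c₂)) := by
        rw [Real.rpow_add two_pos, Real.rpow_add two_pos]; ring
    _ = C * 2 ^ (-(a / 2 * k)) * (2 ^ (a * n) * w₂ (2 ^ (n / c₂))) := by
        rw [hexp, Real.rpow_add two_pos]; ring

theorem stmt7_general (v₁ v₂ : ℝ → ℝ) (h₁ : SVL v₁) (h₂ : SVL v₂)
    (α θ γ₁ γ₁' γ₂ γ₂' : ℝ) (hα : 0 < α) (hθ : 1 ≤ θ)
    (hγ₁' : 0 < γ₁') (hγ₂' : 0 < γ₂')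
    (hδ : γ₂ / γ₂' - γ₁ / γ₁' < 0) :
    ∃ C > (0:ℝ), ∀ n : ℕ,
      ∑ s₂ ∈ Finset.range ⌈(n:ℝ) / γ₂'⌉₊,
          (2:ℝ) ^ (-(s₂:ℝ) * γ₂' * (γ₂ / γ₂' - γ₁ / γ₁') * α * θ)
            * (v₂ ((2:ℝ) ^ (s₂:ℝ))) ^ θ
            * (v₁ ((2:ℝ) ^ (((n:ℝ) - s₂ * γ₂') / γ₁'))) ^ θ
        ≤ C * (2:ℝ) ^ (-(n:ℝ) * (γ₂ / γ₂' - γ₁ / γ₁') * α * θ)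
            * (v₂ ((2:ℝ) ^ ((n:ℝ) / γ₂'))) ^ θ := by
  have hθ₀ : 0 < θ := by linarith
  set a := -((γ₂ / γ₂' - γ₁ / γ₁') * α * θ) with ha_def
  have ha : 0 < a := neg_pos.2 (mul_neg_of_neg_of_pos (mul_neg_of_neg_of_pos hδ hα) hθ₀)
  obtain ⟨C, hC, hsummand⟩ := (h₁.rpow hθ₀).exists_summand_le (h₂.rpow hθ₀) ha hγ₁' hγ₂'
  have hr : (2:ℝ) ^ (-(a / 2 * γ₂')) < 1 :=
    Real.rpow_lt_one_of_one_lt_of_neg one_lt_two (by nlinarith)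
  refine ⟨C * (1 - 2 ^ (-(a / 2 * γ₂')))⁻¹, mul_pos hC (inv_pos.2 (sub_pos.2 hr)), fun n => ?_⟩
  have hexp : ∀ x y : ℝ, -x * y * (γ₂ / γ₂' - γ₁ / γ₁') * α * θ = a * (x * y) := by
    intro x y; rw [ha_def]; ring
  have hexp' : -(n:ℝ) * (γ₂ / γ₂' - γ₁ / γ₁') * α * θ = a * n := by rw [ha_def]; ring
  simp only [hexp, hexp']
  calc _ ≤ ∑ s ∈ Finset.range ⌈(n:ℝ) / γ₂'⌉₊,
          C * 2 ^ (-(a / 2 * (n - s * γ₂'))) * (2 ^ (a * n) * v₂ (2 ^ ((n:ℝ) / γ₂')) ^ θ) :=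
        Finset.sum_le_sum fun s hs => hsummand n s s.cast_nonneg
          ((lt_div_iff₀ hγ₂').1 (Nat.lt_ceil.1 (Finset.mem_range.1 hs))).le
    _ = C * (∑ s ∈ Finset.range ⌈(n:ℝ) / γ₂'⌉₊, (2:ℝ) ^ (-(a / 2 * (n - s * γ₂'))))
          * (2 ^ (a * n) * v₂ (2 ^ ((n:ℝ) / γ₂')) ^ θ) := by
        rw [Finset.mul_sum, Finset.sum_mul]
    _ ≤ _ := by
        have hscale : 0 < 2 ^ (a * n) * v₂ (2 ^ ((n:ℝ) / γ₂')) ^ θ :=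
          mul_pos (by positivity) (Real.rpow_pos_of_pos
            (h₂.pos (Real.one_le_rpow one_le_two (by positivity))) θ)
        rw [mul_assoc _ (2 ^ (a * n))]
        exact mul_le_mul_of_nonneg_right (mul_le_mul_of_nonneg_left
          (sum_range_ceil_two_rpow_le hγ₂' (half_pos ha)) hC.le) hscale.le

/-- (Case `δ < 0`.) For `v₁, v₂ ∈ SVL`, `α > 0`, `θ ∈ [1,∞)`, `γⱼ, γⱼ' > 0` with
`δ := γ₂/γ₂' − γ₁/γ₁' < 0`, there is `C` such that for all `n`,
`∑_{0 ≤ s₂ < n/γ₂'} 2^{-s₂γ₂'δαθ} v₂(2^{s₂})^θ v₁(2^{(n−s₂γ₂')/γ₁'})^θ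
  ≤ C · 2^{-nδαθ} v₂(2^{n/γ₂'})^θ`. -/
theorem stmt7 (v₁ v₂ : ℝ → ℝ) (h₁ : SVL v₁) (h₂ : SVL v₂)
    (α θ γ₁ γ₁' γ₂ γ₂' : ℝ) (hα : 0 < α) (hθ : 1 ≤ θ)
    (hγ₁ : 0 < γ₁) (hγ₁' : 0 < γ₁') (hγ₂ : 0 < γ₂) (hγ₂' : 0 < γ₂')
    (hδ : γ₂ / γ₂' - γ₁ / γ₁' < 0) :
    ∃ C > (0:ℝ), ∀ n : ℕ,
      ∑ s₂ ∈ Finset.range ⌈(n:ℝ) / γ₂'⌉₊,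
          (2:ℝ) ^ (-(s₂:ℝ) * γ₂' * (γ₂ / γ₂' - γ₁ / γ₁') * α * θ)
            * (v₂ ((2:ℝ) ^ (s₂:ℝ))) ^ θ
            * (v₁ ((2:ℝ) ^ (((n:ℝ) - s₂ * γ₂') / γ₁'))) ^ θ
        ≤ C * (2:ℝ) ^ (-(n:ℝ) * (γ₂ / γ₂' - γ₁ / γ₁') * α * θ)
            * (v₂ ((2:ℝ) ^ ((n:ℝ) / γ₂'))) ^ θ :=
  stmt7_general v₁ v₂ h₁ h₂ α θ γ₁ γ₁' γ₂ γ₂' hα hθ hγ₁' hγ₂' hδ
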